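/- arXiv:1306.5637 — 2 statements merged into one kernel-verified Lean document; each statement's English description precedes it below -/
import Mathlib

section
/- In the graph C_{3k+1} (vertices (Z/2)^{3k+1}, adjacency meaning Hamming distance at least 2k+1), every set of three pairwise nonadjacent vertices has a common neighbor. -/
/-! Let `m` be the coordinatewise majority of `x, y, z`, so that at every coordinate at most one of
the three disagrees with `m`. Then `m` is a median: `d(x, y) = d(x, m) + d(y, m)`, and so on, hence
`a = d(x, m)`, `b = d(y, m)`, `c = d(z, m)` satisfy `a + b, a + c, b + c ≤ 2k`; in particular at most
one of them exceeds `k`. The complement of `m` agrees with `x` exactly on the `a` coordinates where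
`x` is outvoted. Resetting `a - k` of these coordinates (and likewise for `y`, `z`) back to `m`
leaves at most `k` agreements with each of `x, y, z`, i.e. distance at least `3k + 1 - k = 2k + 1`. -/

/-- The graph `C_{3k+1}`: vertices are vectors in `(Z/2)^{3k+1}`,
adjacent iff their Hamming distance is at least `2k+1`. -/
def hypercubeGraph (k : ℕ) : SimpleGraph (Fin (3 * k + 1) → ZMod 2) where
  Adj x y := 2 * k + 1 ≤ hammingDist x y
  symm := ⟨by intro x y (h : 2 * k + 1 ≤ hammingDist x y); show 2 * k + 1 ≤ hammingDist y x; rwa [hammingDist_comm]⟩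
  loopless := ⟨by intro x (h : 2 * k + 1 ≤ hammingDist x x); rw [hammingDist_self] at h; omega⟩

open Finset

section

variable {ι : Type*}

theorem exists_majority (x y z : ι → ZMod 2) :
    ∃ m : ι → ZMod 2, ∀ i, (x i = m i ∨ y i = m i) ∧ (x i = m i ∨ z i = m i) ∧
      (y i = m i ∨ z i = m i) :=
  have hmaj : ∀ a b c : ZMod 2, let m := if a = b then a else c
      (a = m ∨ b = m) ∧ (a = m ∨ c = m) ∧ (b = m ∨ c = m) := by decide
  ⟨fun i => if x i = y i then x i else z i, fun i => hmaj (x i) (y i) (z i)⟩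

variable [Fintype ι]

theorem hammingDist_eq_add_of_forall_eq_or_eq {β : Type*} [DecidableEq β] [DecidableEq ι]
    {x y m : ι → β} (h : ∀ i, x i = m i ∨ y i = m i) :
    hammingDist x y = hammingDist x m + hammingDist y m := by
  rw [hammingDist, hammingDist, hammingDist, ← card_union_of_disjoint]
  · congr 1
    ext i
    simp only [mem_filter, mem_univ, true_and, mem_union]
    rcases h i with h | h <;> rw [h] <;> tauto
  · exact disjoint_filter.2 fun i _ hx hy => (h i).elim hx hy

/-- Outside `E ∪ F` the vector is the complement of `m`, so it agrees with `w` only on `F` or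
where `w` disagrees with `m` outside `E`. -/
theorem card_le_hammingDist_add_of_subset [DecidableEq ι] (m w : ι → ZMod 2) {E F : Finset ι}
    (hE : E ⊆ ({i | w i ≠ m i} : Finset ι)) :
    Fintype.card ι ≤
      hammingDist (fun i => if i ∈ E ∪ F then m i else m i + 1) w
        + (hammingDist w m - #E) + #F := by
  set v : ι → ZMod 2 := fun i => if i ∈ E ∪ F then m i else m i + 1
  have hagree : ({i | v i = w i} : Finset ι) ⊆ (({i | w i ≠ m i} : Finset ι) \ E) ∪ F := by
    intro i
    simp only [v, mem_filter, mem_univ, true_and, mem_union, mem_sdiff]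
    by_cases hF : i ∈ F
    · simp [hF]
    by_cases hEi : i ∈ E
    · have := mem_filter.1 (hE hEi)
      simp only [hEi, hF, or_false, if_true]
      exact fun h => absurd h.symm this.2
    · simp only [hEi, hF, or_false, if_false]
      generalize w i = a, m i = b
      revert a b
      decide
  calc Fintype.card ι = hammingDist v w + #({i | v i = w i} : Finset ι) := by
        rw [hammingDist, add_comm, card_filter_add_card_filter_not, card_univ]
    _ ≤ hammingDist v w + #(({i | w i ≠ m i} : Finset ι) \ E ∪ F) := by
        gcongr
    _ ≤ hammingDist v w + (hammingDist w m - #E) + #F := by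
        have hsdiff : #(({i | w i ≠ m i} : Finset ι) \ E) = hammingDist w m - #E :=
          card_sdiff_of_subset hE
        rw [add_assoc, ← hsdiff]
        exact Nat.add_le_add_left (card_union_le _ _) _

theorem exists_hammingDist_ge_of_hammingDist_le [DecidableEq ι] {k : ℕ} (x y z : ι → ZMod 2)
    (hxy : hammingDist x y ≤ 2 * k) (hxz : hammingDist x z ≤ 2 * k)
    (hyz : hammingDist y z ≤ 2 * k) :
    ∃ v : ι → ZMod 2, Fintype.card ι ≤ hammingDist v x + k ∧
      Fintype.card ι ≤ hammingDist v y + k ∧ Fintype.card ι ≤ hammingDist v z + k := by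
  obtain ⟨m, hm⟩ := exists_majority x y z
  rw [hammingDist_eq_add_of_forall_eq_or_eq fun i => (hm i).1] at hxy
  rw [hammingDist_eq_add_of_forall_eq_or_eq fun i => (hm i).2.1] at hxz
  rw [hammingDist_eq_add_of_forall_eq_or_eq fun i => (hm i).2.2] at hyz
  obtain ⟨Ex, hEx, cEx⟩ := exists_subset_card_eq (Nat.sub_le (hammingDist x m) k)
  obtain ⟨Ey, hEy, cEy⟩ := exists_subset_card_eq (Nat.sub_le (hammingDist y m) k)
  obtain ⟨Ez, hEz, cEz⟩ := exists_subset_card_eq (Nat.sub_le (hammingDist z m) k)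
  have hx := card_le_hammingDist_add_of_subset m x (F := Ey ∪ Ez) hEx
  have hy := card_le_hammingDist_add_of_subset m y (F := Ex ∪ Ez) hEy
  have hz := card_le_hammingDist_add_of_subset m z (F := Ex ∪ Ey) hEz
  rw [← union_assoc] at hx
  rw [union_left_comm, ← union_assoc] at hy
  rw [union_comm] at hz
  have uyz := card_union_le Ey Ez
  have uxz := card_union_le Ex Ez
  have uxy := card_union_le Ex Ey
  exact ⟨fun i => if i ∈ Ex ∪ Ey ∪ Ez then m i else m i + 1, by omega, by omega, by omega⟩

end

theorem stmt_2_general (k : ℕ) (x y z : Fin (3 * k + 1) → ZMod 2)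
    (nxy : ¬ (hypercubeGraph k).Adj x y)
    (nxz : ¬ (hypercubeGraph k).Adj x z)
    (nyz : ¬ (hypercubeGraph k).Adj y z) :
    ∃ v, (hypercubeGraph k).Adj v x ∧ (hypercubeGraph k).Adj v y ∧
      (hypercubeGraph k).Adj v z := by
  simp only [hypercubeGraph, not_le] at nxy nxz nyz ⊢
  obtain ⟨v, hx, hy, hz⟩ := exists_hammingDist_ge_of_hammingDist_le (k := k) x y z
    (by omega) (by omega) (by omega)
  rw [Fintype.card_fin] at hx hy hz
  exact ⟨v, by omega, by omega, by omega⟩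

theorem stmt_2 (k : ℕ) (hk : 0 < k) (x y z : Fin (3 * k + 1) → ZMod 2)
    (hxy : x ≠ y) (hxz : x ≠ z) (hyz : y ≠ z)
    (nxy : ¬ (hypercubeGraph k).Adj x y)
    (nxz : ¬ (hypercubeGraph k).Adj x z)
    (nyz : ¬ (hypercubeGraph k).Adj y z) :
    ∃ v, (hypercubeGraph k).Adj v x ∧ (hypercubeGraph k).Adj v y ∧
      (hypercubeGraph k).Adj v z :=
  stmt_2_general k x y z nxy nxz nyz
end

section
/- There is an absolute constant C > 0 such that, as m, n → ∞ with m ≥ C log n and n ≥ C log m, the probability that a uniformly random m × n zero-one matrix is shattered tends to 1. -/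
open scoped Classical

/-- A 0-1 matrix is *shattered* if any three distinct rows realize all four
column-patterns `aaa`, `aab`, `aba`, `baa` (up to complement), and similarly
for any three distinct columns. -/
def Shattered {m n : ℕ} (M : Fin m → Fin n → Bool) : Prop :=
  (∀ i₁ i₂ i₃ : Fin m, i₁ ≠ i₂ → i₁ ≠ i₃ → i₂ ≠ i₃ →
    (∃ j, M i₁ j = M i₂ j ∧ M i₂ j = M i₃ j) ∧
    (∃ j, M i₁ j = M i₂ j ∧ M i₂ j ≠ M i₃ j) ∧
    (∃ j, M i₁ j = M i₃ j ∧ M i₁ j ≠ M i₂ j) ∧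
    (∃ j, M i₂ j = M i₃ j ∧ M i₁ j ≠ M i₂ j)) ∧
  (∀ j₁ j₂ j₃ : Fin n, j₁ ≠ j₂ → j₁ ≠ j₃ → j₂ ≠ j₃ →
    (∃ i, M i j₁ = M i j₂ ∧ M i j₂ = M i j₃) ∧
    (∃ i, M i j₁ = M i j₂ ∧ M i j₂ ≠ M i j₃) ∧
    (∃ i, M i j₁ = M i j₃ ∧ M i j₁ ≠ M i j₂) ∧
    (∃ i, M i j₂ = M i j₃ ∧ M i j₁ ≠ M i j₂))

/-- The probability that a uniformly random `m × n` 0-1 matrix is shattered: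
the number of shattered matrices divided by `2 ^ (m * n)`. -/
noncomputable def shatteredProb (m n : ℕ) : ℝ :=
  ((Finset.univ.filter fun M : Fin m → Fin n → Bool => Shattered M).card : ℝ) /
    2 ^ (m * n)

/-!
Read on three distinct rows, a column has one of four patterns up to complement, determined by
which of its consecutive entries differ; the rows are shattered exactly when the columns realize
all four. For fixed rows and a fixed pattern, each of the `n` independent columns avoids it with
probability `3/4`, so a union bound over at most `4 m³` choices shows that the rows fail with
probability at most `4 m³ (3/4)ⁿ`, and symmetrically for the columns. If `n ≥ 24 log m`, then
`m³ (3/4)ⁿ ≤ e^(-n/8)`, which tends to `0`.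
-/

open Finset Function Real Filter Topology

/-- The values `(false, false)`, `(false, true)`, `(true, true)`, `(true, false)` are the patterns
`aaa`, `aab`, `aba`, `baa`. -/
def columnPattern (t : Fin 3 → Bool) : Bool × Bool := (t 0 != t 1, t 1 != t 2)

def RowsShattered {ι κ : Type*} (M : ι → κ → Bool) : Prop :=
  ∀ e : Fin 3 ↪ ι, Surjective fun j => columnPattern fun a => M (e a) j

theorem RowsShattered.exists_patterns {ι κ : Type*} {M : ι → κ → Bool} (h : RowsShattered M)
    {i₁ i₂ i₃ : ι} (h₁₂ : i₁ ≠ i₂) (h₁₃ : i₁ ≠ i₃) (h₂₃ : i₂ ≠ i₃) :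
    (∃ j, M i₁ j = M i₂ j ∧ M i₂ j = M i₃ j) ∧
    (∃ j, M i₁ j = M i₂ j ∧ M i₂ j ≠ M i₃ j) ∧
    (∃ j, M i₁ j = M i₃ j ∧ M i₁ j ≠ M i₂ j) ∧
    (∃ j, M i₂ j = M i₃ j ∧ M i₁ j ≠ M i₂ j) := by
  have hinj : Injective ![i₁, i₂, i₃] := by
    intro a b hab
    fin_cases a <;> fin_cases b <;> simp_all [eq_comm]
  have hsurj : ∀ x y, ∃ j, (M i₁ j != M i₂ j) = x ∧ (M i₂ j != M i₃ j) = y := fun x y =>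
    (h ⟨_, hinj⟩ (x, y)).imp fun _ hj => Prod.mk.inj hj
  simp only [Bool.forall_bool, bne_eq_false_iff_eq, bne_iff_ne, ne_eq] at hsurj
  obtain ⟨⟨hsame, hlast⟩, hfirst, j, h₁, h₂⟩ := hsurj
  refine ⟨hsame, hlast, ⟨j, ?_, h₁⟩, hfirst.imp fun _ hj => hj.symm⟩
  -- in `Bool`, `a ≠ b` and `b ≠ c` force `a = c`
  revert h₁ h₂; cases M i₁ j <;> cases M i₂ j <;> cases M i₃ j <;> decide

theorem shattered_of_rowsShattered {m n : ℕ} {M : Fin m → Fin n → Bool}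
    (hrows : RowsShattered M) (hcols : RowsShattered (swap M)) : Shattered M :=
  ⟨fun _ _ _ => hrows.exists_patterns, fun _ _ _ => hcols.exists_patterns⟩

theorem card_filter_forall_restrict_mem_le {ι κ β : Type*} [Fintype ι] [Fintype κ] [Fintype β]
    [DecidableEq ι] [DecidableEq κ] [DecidableEq β]
    {k : ℕ} (e : Fin k ↪ ι) (T : Finset (Fin k → β)) :
    #{M : ι → κ → β | ∀ j, (fun a => M (e a) j) ∈ T} ≤
      #T ^ Fintype.card κ * Fintype.card β ^ (Fintype.card κ * (Fintype.card ι - k)) := by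
  let split (M : ι → κ → β) : (κ → Fin k → β) × ({i // i ∉ Set.range e} → κ → β) :=
    (fun j a => M (e a) j, fun i => M i)
  have hinj : Set.InjOn split {M | ∀ j, (fun a => M (e a) j) ∈ T} := by
    intro M _ M' _ h
    simp only [split, Prod.mk.injEq] at h
    funext i
    by_cases hi : i ∈ Set.range e
    · obtain ⟨a, rfl⟩ := hi
      exact funext fun j => congrFun (congrFun h.1 j) a
    · exact congrFun h.2 ⟨i, hi⟩
  calc _ ≤ #(Fintype.piFinset (fun _ => T) ×ˢ
        (univ : Finset ({i // i ∉ Set.range e} → κ → β))) := by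
        refine card_le_card_of_injOn split (fun M hM => ?_) (by simpa using hinj)
        simp only [coe_filter, mem_univ, true_and, Set.mem_ofPred_eq] at hM
        simp [split, hM]
    _ = _ := by
        rw [card_product, Fintype.card_piFinset, prod_const, card_univ, card_univ,
          Fintype.card_fun, Fintype.card_fun, Fintype.card_subtype_compl,
          Set.card_range_of_injective e.injective, Fintype.card_fin, ← pow_mul, mul_comm]

theorem card_filter_not_rowsShattered_le (ι κ : Type*) [Fintype ι] [Fintype κ]
    [DecidableEq ι] [DecidableEq κ] :
    #{M : ι → κ → Bool | ¬RowsShattered M} ≤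
      4 * Fintype.card ι ^ 3 *
        (6 ^ Fintype.card κ * 2 ^ (Fintype.card κ * (Fintype.card ι - 3))) := by
  let avoiding (q : (Fin 3 ↪ ι) × (Bool × Bool)) : Finset (ι → κ → Bool) :=
    {M | ∀ j, (fun a => M (q.1 a) j) ∈ ({t | columnPattern t ≠ q.2} : Finset (Fin 3 → Bool))}
  have hsub : ({M | ¬RowsShattered M} : Finset (ι → κ → Bool)) ⊆ univ.biUnion avoiding := by
    intro M hM
    simp only [mem_filter, mem_univ, true_and, RowsShattered, Surjective, not_forall,
      not_exists] at hM
    obtain ⟨e, p, hp⟩ := hM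
    exact mem_biUnion.2 ⟨(e, p), mem_univ _, by simpa [avoiding] using hp⟩
  have hpattern : ∀ p : Bool × Bool, #{t : Fin 3 → Bool | columnPattern t ≠ p} = 6 := by
    decide
  calc #{M : ι → κ → Bool | ¬RowsShattered M} ≤ #(univ.biUnion avoiding) := card_le_card hsub
    _ ≤ ∑ q, #(avoiding q) := card_biUnion_le
    _ ≤ ∑ _q : (Fin 3 ↪ ι) × (Bool × Bool),
          6 ^ Fintype.card κ * 2 ^ (Fintype.card κ * (Fintype.card ι - 3)) := by
        refine sum_le_sum fun q _ => ?_
        exact (card_filter_forall_restrict_mem_le q.1 _).trans_eq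
          (by rw [hpattern, Fintype.card_bool])
    _ ≤ _ := by
        rw [sum_const, card_univ, Fintype.card_prod, Fintype.card_embedding_eq, Fintype.card_fin,
          smul_eq_mul, Fintype.card_prod, Fintype.card_bool]
        gcongr ?_ * _
        rw [mul_comm]
        gcongr
        exact Nat.descFactorial_le_pow _ _

theorem card_filter_not_shattered_le (m n : ℕ) :
    #{M : Fin m → Fin n → Bool | ¬Shattered M} ≤
      #{M : Fin m → Fin n → Bool | ¬RowsShattered M} +
        #{M : Fin n → Fin m → Bool | ¬RowsShattered M} := by
  have hswap : #{M : Fin m → Fin n → Bool | ¬RowsShattered (swap M)} =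
      #{M : Fin n → Fin m → Bool | ¬RowsShattered M} :=
    card_equiv (Equiv.piComm _) (by simp [Equiv.piComm])
  rw [← hswap]
  refine (card_le_card fun M hM => ?_).trans (card_union_le _ _)
  simp only [mem_filter, mem_univ, true_and, mem_union] at hM ⊢
  by_contra! h
  exact hM (shattered_of_rowsShattered h.1 h.2)

theorem six_pow_mul_two_pow_eq {m : ℕ} (hm : 3 ≤ m) (n : ℕ) :
    (6 : ℝ) ^ n * 2 ^ (n * (m - 3)) = (3 / 4) ^ n * 2 ^ (m * n) := by
  obtain ⟨k, rfl⟩ := Nat.exists_eq_add_of_le' hm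
  rw [add_tsub_cancel_right, show (6 : ℝ) = 3 / 4 * 2 ^ 3 by norm_num, mul_pow, ← pow_mul]
  ring

theorem shatteredProb_eq (m n : ℕ) :
    shatteredProb m n = 1 - #{M : Fin m → Fin n → Bool | ¬Shattered M} / 2 ^ (m * n) := by
  have hcard : #{M : Fin m → Fin n → Bool | Shattered M} +
      #{M : Fin m → Fin n → Bool | ¬Shattered M} = 2 ^ (m * n) := by
    rw [card_filter_add_card_filter_not, card_univ, Fintype.card_fun, Fintype.card_fun]
    simp [← pow_mul, mul_comm]
  rw [shatteredProb, eq_sub_iff_add_eq, ← add_div, div_eq_one_iff_eq (by positivity)]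
  exact_mod_cast hcard

theorem one_sub_le_shatteredProb {m n : ℕ} (hm : 3 ≤ m) (hn : 3 ≤ n) :
    1 - (4 * (m : ℝ) ^ 3 * (3 / 4) ^ n + 4 * (n : ℝ) ^ 3 * (3 / 4) ^ m) ≤ shatteredProb m n := by
  have hbad := (card_filter_not_shattered_le m n).trans <| add_le_add
    (card_filter_not_rowsShattered_le (Fin m) (Fin n))
    (card_filter_not_rowsShattered_le (Fin n) (Fin m))
  simp only [Fintype.card_fin] at hbad
  rw [shatteredProb_eq, sub_le_sub_iff_left, div_le_iff₀ (by positivity), add_mul]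
  calc _ ≤ ((4 * m ^ 3 * (6 ^ n * 2 ^ (n * (m - 3))) +
        4 * n ^ 3 * (6 ^ m * 2 ^ (m * (n - 3))) : ℕ) : ℝ) := Nat.cast_le.2 hbad
    _ = _ := by
        push_cast
        rw [six_pow_mul_two_pow_eq hm, six_pow_mul_two_pow_eq hn, mul_comm n m]
        ring

theorem cube_mul_three_quarters_pow_le {m n : ℕ} (hmn : 24 * log m ≤ n) :
    (m : ℝ) ^ 3 * (3 / 4) ^ n ≤ exp (-1 / 8) ^ n := by
  have hquarter : (3 / 4 : ℝ) ≤ exp (-1 / 4) := by linarith [add_one_le_exp (-1 / 4 : ℝ)]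
  calc (m : ℝ) ^ 3 * (3 / 4) ^ n ≤ exp (log m) ^ 3 * exp (-1 / 4) ^ n := by
        gcongr
        exact le_exp_log _
    _ = exp (3 * log m + n * (-1 / 4)) := by
        rw [← exp_nat_mul, ← exp_nat_mul, ← exp_add]
        norm_num
    _ ≤ exp (n * (-1 / 8)) := exp_le_exp.2 (by linarith)
    _ = exp (-1 / 8) ^ n := exp_nat_mul _ _

theorem stmt_8 :
    ∃ C : ℝ, 0 < C ∧ ∀ ε : ℝ, 0 < ε → ∃ N : ℕ, ∀ m n : ℕ,
      N ≤ m → N ≤ n → C * Real.log n ≤ m → C * Real.log m ≤ n →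
      1 - ε ≤ shatteredProb m n := by
  refine ⟨24, by norm_num, fun ε hε => ?_⟩
  have hdecay : Tendsto (fun n : ℕ => 4 * exp (-1 / 8) ^ n) atTop (𝓝 (4 * 0)) :=
    (tendsto_pow_atTop_nhds_zero_of_lt_one (exp_pos _).le
      (exp_lt_one_iff.2 (by norm_num))).const_mul 4
  obtain ⟨N, hN⟩ := eventually_atTop.1 <|
    hdecay.eventually (eventually_le_nhds (by linarith : 4 * (0 : ℝ) < ε / 2))
  refine ⟨max 3 N, fun m n hm hn hnm hmn => ?_⟩
  have hprob := one_sub_le_shatteredProb (le_of_max_le_left hm) (le_of_max_le_left hn)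
  have hrows := cube_mul_three_quarters_pow_le hmn
  have hcols := cube_mul_three_quarters_pow_le hnm
  linarith [hN m (le_of_max_le_right hm), hN n (le_of_max_le_right hn)]
end
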